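/- In the smooth RCSN setting, suppose φ is bounded below on E, that x̄ is an accumulation point of (x_k), and that φ satisfies the Kurdyka–Łojasiewicz property at x̄ with ψ(t) = M t^{1−θ} for some M > 0 and θ ∈ (1/2, 1): there exists η > 0 such that M(1−θ)(φ(x) − φ(x̄))^{−θ} · ‖∇φ(x)‖ ≥ 1 for all x with ‖x − x̄‖ ≤ η and φ(x̄) < φ(x) < φ(x̄) + η. Then there exist μ > 0 and k₀ ∈ ℕ such that ‖x_k − x̄‖ ≤ μ k^{−(1−θ)/(2θ−1)} for all k ≥ k₀. -/

import Mathlib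

/-!
Armijo's rule gives the sufficient decrease `σ ζ τₖ ‖dₖ‖² ≤ φ(xₖ) - φ(xₖ₊₁)`, and near `x̄` the
regularized Newton equation bounds `‖∇φ(xₖ)‖` by a multiple of `‖dₖ‖`. Together with the KL
inequality and the concavity of `s ↦ s ^ (1 - θ)`, this bounds the step `‖xₖ₊₁ - xₖ‖` by the
decrease of `B rₖ ^ (1 - θ)`, where `rₖ = φ(xₖ) - φ(x̄) > 0`. Hence once an iterate is close
enough to `x̄` the sequence can no longer escape, and summing the tail gives
`‖xₖ - x̄‖ ≤ B rₖ ^ (1 - θ)`; in particular `xₖ → x̄`. Since `∇φ` is Lipschitz near `x̄`, the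
backtracking step sizes are then bounded below, and KL turns the sufficient decrease into
`rₖ - rₖ₊₁ ≥ c rₖ ^ (2θ)`. For `θ > 1/2` the convexity of `s ↦ s ^ (1 - 2θ)` yields
`rₖ ^ (1 - 2θ) ≥ c' k`, i.e. `rₖ = O(k ^ (-1 / (2θ - 1)))`, and the rate for `‖xₖ - x̄‖` follows.
-/

open scoped RealInnerProductSpace NNReal
open Filter Topology

/-- Concavity of `s ↦ s ^ (1 - θ)` at `a`, multiplied through by `a ^ θ`. -/
theorem one_sub_mul_sub_le_rpow_mul_rpow_sub {a b θ : ℝ} (ha : 0 ≤ a) (hb : 0 ≤ b)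
    (hθ₀ : 0 ≤ θ) (hθ₁ : θ ≤ 1) :
    (1 - θ) * (a - b) ≤ a ^ θ * (a ^ (1 - θ) - b ^ (1 - θ)) := by
  have hamgm : a ^ θ * b ^ (1 - θ) ≤ θ * a + (1 - θ) * b :=
    Real.geom_mean_le_arith_mean2_weighted hθ₀ (sub_nonneg.2 hθ₁) ha hb (by ring)
  have hsplit : a ^ θ * a ^ (1 - θ) = a := by
    rw [← Real.rpow_add' ha (by norm_num), add_sub_cancel, Real.rpow_one]
  linarith [mul_sub (a ^ θ) (a ^ (1 - θ)) (b ^ (1 - θ))]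

/-- Convexity of `s ↦ s ^ (-q)` at `a` (Bernoulli's inequality), multiplied through by
`a ^ (1 + q)`. -/
theorem add_mul_sub_le_rpow_mul_rpow_neg {a b q : ℝ} (ha : 0 ≤ a) (hb : 0 < b) (hq : 0 ≤ q) :
    a + q * (a - b) ≤ a ^ (1 + q) * b ^ (-q) := by
  have hbern : 1 + (1 + q) * (a / b - 1) ≤ (a / b) ^ (1 + q) := by
    simpa using one_add_mul_self_le_rpow_one_add (s := a / b - 1)
      (by linarith [div_nonneg ha hb.le]) (p := 1 + q) (by linarith)
  calc a + q * (a - b) = b * (1 + (1 + q) * (a / b - 1)) := by field_simp; ring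
    _ ≤ b * (a / b) ^ (1 + q) := by gcongr
    _ = a ^ (1 + q) * b ^ (-q) := by
      rw [Real.div_rpow ha hb.le, Real.rpow_add hb, Real.rpow_one, Real.rpow_neg hb.le]
      field_simp

theorem step_length_le_of_kl {r r' t n κ K θ : ℝ} (hr : 0 < r) (hr' : 0 ≤ r')
    (hθ₀ : 0 ≤ θ) (hθ₁ : θ ≤ 1) (hκ : 0 ≤ κ) (ht : 0 ≤ t) (hn : 0 ≤ n) (hK : 0 ≤ K)
    (hdec : κ * (t * n ^ 2) ≤ r - r') (hkl : r ^ θ ≤ K * n) :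
    κ * (1 - θ) * (t * n) ≤ K * (r ^ (1 - θ) - r' ^ (1 - θ)) := by
  refine le_of_mul_le_mul_left ?_ (Real.rpow_pos_of_pos hr θ)
  calc r ^ θ * (κ * (1 - θ) * (t * n)) ≤ K * n * (κ * (1 - θ) * (t * n)) := by gcongr
    _ = (1 - θ) * K * (κ * (t * n ^ 2)) := by ring
    _ ≤ (1 - θ) * K * (r - r') := by gcongr
    _ = K * ((1 - θ) * (r - r')) := by ring
    _ ≤ K * (r ^ θ * (r ^ (1 - θ) - r' ^ (1 - θ))) :=
      mul_le_mul_of_nonneg_left (one_sub_mul_sub_le_rpow_mul_rpow_sub hr.le hr' hθ₀ hθ₁) hK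
    _ = r ^ θ * (K * (r ^ (1 - θ) - r' ^ (1 - θ))) := by ring

theorem mul_rpow_two_mul_le_of_kl {r r' t t₀ n κ K θ : ℝ} (hr : 0 ≤ r) (hκ : 0 ≤ κ)
    (ht₀ : 0 ≤ t₀) (ht : t₀ ≤ t) (hK : 0 < K)
    (hdec : κ * (t * n ^ 2) ≤ r - r') (hkl : r ^ θ ≤ K * n) :
    κ * t₀ / K ^ 2 * r ^ (2 * θ) ≤ r - r' := by
  have hsq : r ^ (2 * θ) ≤ K ^ 2 * n ^ 2 := by
    rw [mul_comm, Real.rpow_mul hr, Real.rpow_two, ← mul_pow]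
    exact pow_le_pow_left₀ (Real.rpow_nonneg hr θ) hkl 2
  calc κ * t₀ / K ^ 2 * r ^ (2 * θ) ≤ κ * t₀ / K ^ 2 * (K ^ 2 * n ^ 2) := by gcongr
    _ = κ * (t₀ * n ^ 2) := by field_simp
    _ ≤ κ * (t * n ^ 2) := by gcongr
    _ ≤ r - r' := hdec

theorem rpow_neg_add_le_rpow_neg_of_mul_rpow_le_sub {a b c q : ℝ} (ha : 0 < a) (hb : 0 < b)
    (hq : 0 ≤ q) (h : c * a ^ (1 + q) ≤ a - b) : a ^ (-q) + q * c ≤ b ^ (-q) := by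
  have hapos : 0 < a ^ (1 + q) := Real.rpow_pos_of_pos ha _
  have hsplit : a ^ (-q) * a ^ (1 + q) = a := by
    rw [← Real.rpow_add ha, show -q + (1 + q) = 1 by ring, Real.rpow_one]
  refine le_of_mul_le_mul_right ?_ hapos
  calc (a ^ (-q) + q * c) * a ^ (1 + q) = a + q * (c * a ^ (1 + q)) := by rw [add_mul, hsplit]; ring
    _ ≤ a + q * (a - b) := by gcongr
    _ ≤ a ^ (1 + q) * b ^ (-q) := add_mul_sub_le_rpow_mul_rpow_neg ha.le hb hq
    _ = b ^ (-q) * a ^ (1 + q) := mul_comm _ _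

theorem rpow_neg_add_le_of_mul_rpow_le_sub {r : ℕ → ℝ} {c q : ℝ} (hr : ∀ k, 0 < r k)
    (hq : 0 ≤ q) {k₀ : ℕ} (hrec : ∀ k ≥ k₀, c * r k ^ (1 + q) ≤ r k - r (k + 1)) (n : ℕ) :
    r k₀ ^ (-q) + q * c * n ≤ r (k₀ + n) ^ (-q) := by
  induction n with
  | zero => simp
  | succ n ih =>
    have hstep := rpow_neg_add_le_rpow_neg_of_mul_rpow_le_sub (hr _) (hr _) hq
      (hrec (k₀ + n) (Nat.le_add_right k₀ n))
    rw [← add_assoc]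
    push_cast
    linarith

theorem exists_rpow_le_mul_rpow_of_mul_rpow_le_sub {r : ℕ → ℝ} {c q p : ℝ}
    (hr : ∀ k, 0 < r k) (hc : 0 < c) (hq : 0 < q) (hp : 0 ≤ p)
    (hrec : ∀ᶠ k in atTop, c * r k ^ (1 + q) ≤ r k - r (k + 1)) :
    ∃ A > 0, ∀ᶠ k in atTop, r k ^ p ≤ A * (k : ℝ) ^ (-(p / q)) := by
  obtain ⟨k₀, hk₀⟩ := eventually_atTop.1 hrec
  refine ⟨(q * c / 2) ^ (-(p / q)), by positivity, ?_⟩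
  filter_upwards [eventually_ge_atTop (2 * k₀ + 1)] with k hk
  have hkpos : (0 : ℝ) < k := by exact_mod_cast (show 0 < k by omega)
  have hlower : q * c / 2 * k ≤ r k ^ (-q) := by
    have hsum := rpow_neg_add_le_of_mul_rpow_le_sub hr hq.le hk₀ (k - k₀)
    rw [Nat.add_sub_cancel' (by omega)] at hsum
    have hhalf : (k : ℝ) / 2 ≤ ((k - k₀ : ℕ) : ℝ) := by
      rw [Nat.cast_sub (by omega)]
      have : (2 * k₀ + 1 : ℝ) ≤ k := by exact_mod_cast hk
      linarith
    have := Real.rpow_nonneg (hr k₀).le (-q)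
    nlinarith [mul_le_mul_of_nonneg_left hhalf (by positivity : (0 : ℝ) ≤ q * c)]
  calc r k ^ p = (r k ^ (-q)) ^ (-(p / q)) := by
        rw [← Real.rpow_mul (hr k).le]; congr 1; field_simp
    _ ≤ (q * c / 2 * k) ^ (-(p / q)) :=
        Real.rpow_le_rpow_of_nonpos (by positivity) hlower (by simp; positivity)
    _ = (q * c / 2) ^ (-(p / q)) * (k : ℝ) ^ (-(p / q)) := Real.mul_rpow (by positivity) hkpos.le

theorem exists_rpow_le_mul_rpow_of_kl {r t n : ℕ → ℝ} {κ K θ t₀ p : ℝ} (hr : ∀ k, 0 < r k)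
    (hκ : 0 < κ) (hK : 0 < K) (ht₀ : 0 < t₀) (hθ : 1 / 2 < θ) (hp : 0 ≤ p)
    (hdec : ∀ k, κ * (t k * n k ^ 2) ≤ r k - r (k + 1))
    (hkl : ∀ᶠ k in atTop, r k ^ θ ≤ K * n k) (ht : ∀ᶠ k in atTop, t₀ ≤ t k) :
    ∃ A > 0, ∀ᶠ k in atTop, r k ^ p ≤ A * (k : ℝ) ^ (-(p / (2 * θ - 1))) := by
  refine exists_rpow_le_mul_rpow_of_mul_rpow_le_sub hr
    (div_pos (mul_pos hκ ht₀) (pow_pos hK 2)) (by linarith) hp ?_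
  filter_upwards [hkl, ht] with k hklk htk
  rw [add_sub_cancel]
  exact mul_rpow_two_mul_le_of_kl (hr k).le hκ.le ht₀.le htk hK (hdec k) hklk

theorem StrictAnti.tendsto_and_lt_of_tendsto_comp {u : ℕ → ℝ} {s : ℕ → ℕ} {l : ℝ}
    (hu : StrictAnti u) (hs : StrictMono s) (hl : Tendsto (u ∘ s) atTop (𝓝 l)) :
    Tendsto u atTop (𝓝 l) ∧ ∀ k, l < u k := by
  have hlim := (tendsto_iff_tendsto_subseq_of_antitone hu.antitone hs.tendsto_atTop).2 hl
  exact ⟨hlim, fun k => (hu.antitone.le_of_tendsto hlim (k + 1)).trans_lt (hu k.lt_succ_self)⟩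

theorem eventually_dist_le_of_dist_succ_le {X : Type*} [PseudoMetricSpace X] {x : ℕ → X} {a : X}
    {ψ : ℕ → ℝ} {ρ : ℝ} (hρ : 0 < ρ) (hψ₀ : ∀ k, 0 ≤ ψ k) (hψ : Tendsto ψ atTop (𝓝 0))
    (ha : MapClusterPt a atTop x)
    (hstep : ∀ᶠ k in atTop, dist (x k) a ≤ ρ → dist (x (k + 1)) (x k) ≤ ψ k - ψ (k + 1)) :
    ∀ᶠ k in atTop, dist (x k) a ≤ ψ k := by
  obtain ⟨K, hK⟩ := eventually_atTop.1 (hstep.and (hψ.eventually (gt_mem_nhds (half_pos hρ))))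
  obtain ⟨k₁, hk₁K, hk₁⟩ :=
    frequently_atTop.1 (ha.frequently (Metric.ball_mem_nhds a (half_pos hρ))) K
  -- `dist (x k) a + ψ k` cannot increase while `x k` stays within `ρ` of `a`, so it never leaves.
  have hinv : ∀ k ≥ k₁, dist (x k) a + ψ k ≤ dist (x k₁) a + ψ k₁ := by
    intro k hk
    induction k, hk using Nat.le_induction with
    | base => exact le_rfl
    | succ k hk ih =>
      have hstay : dist (x k) a ≤ ρ := by linarith [hψ₀ k, (hK k₁ hk₁K).2]
      linarith [(hK k (hk₁K.trans hk)).1 hstay, dist_triangle (x (k + 1)) (x k) a]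
  have htail : ∀ k ≥ k₁, ∀ m ≥ k, dist (x m) (x k) ≤ ψ k - ψ m := by
    intro k hk m hm
    induction m, hm using Nat.le_induction with
    | base => simp
    | succ m hm ih =>
      have hstay : dist (x m) a ≤ ρ := by
        linarith [hψ₀ m, (hK k₁ hk₁K).2, hinv m (hk.trans hm)]
      linarith [(hK m ((hk₁K.trans hk).trans hm)).1 hstay, dist_triangle (x (m + 1)) (x m) (x k)]
  filter_upwards [eventually_ge_atTop k₁] with k hk
  have hmem : a ∈ Metric.closedBall (x k) (ψ k) :=
    Metric.isClosed_closedBall.mem_of_mapClusterPt ha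
      (eventually_atTop.2 ⟨k, fun m hm => by
        rw [Metric.mem_closedBall]; linarith [htail k hk m hm, hψ₀ m]⟩)
  rwa [Metric.mem_closedBall, dist_comm] at hmem

theorem tendsto_and_eventually_norm_sub_le_of_kl {E : Type*} [SeminormedAddCommGroup E]
    {x : ℕ → E} {a : E} {r t n : ℕ → ℝ} {κ K θ ρ : ℝ} (hρ : 0 < ρ) (hκ : 0 < κ) (hK : 0 < K)
    (hθ : θ ∈ Set.Ioo 0 1) (hr : ∀ k, 0 < r k) (hr0 : Tendsto r atTop (𝓝 0))
    (ht : ∀ k, 0 ≤ t k) (hn : ∀ k, 0 ≤ n k) (hx : ∀ k, ‖x (k + 1) - x k‖ = t k * n k)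
    (hdec : ∀ k, κ * (t k * n k ^ 2) ≤ r k - r (k + 1))
    (hkl : ∀ k, ‖x k - a‖ ≤ ρ → r k < ρ → r k ^ θ ≤ K * n k) (ha : MapClusterPt a atTop x) :
    Tendsto x atTop (𝓝 a) ∧ ∃ B > 0, ∀ᶠ k in atTop, ‖x k - a‖ ≤ B * r k ^ (1 - θ) := by
  obtain ⟨hθ₀, hθ₁⟩ := hθ
  have hκθ : 0 < κ * (1 - θ) := mul_pos hκ (by linarith)
  have hB : 0 < K / (κ * (1 - θ)) := div_pos hK hκθ
  have hψ : Tendsto (fun k => K / (κ * (1 - θ)) * r k ^ (1 - θ)) atTop (𝓝 0) := by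
    have hpow := hr0.rpow_const (p := 1 - θ) (Or.inr (by linarith))
    rw [Real.zero_rpow (by linarith)] at hpow
    simpa using hpow.const_mul (K / (κ * (1 - θ)))
  have hdist : ∀ᶠ k in atTop, ‖x k - a‖ ≤ K / (κ * (1 - θ)) * r k ^ (1 - θ) := by
    simp only [← dist_eq_norm]
    refine eventually_dist_le_of_dist_succ_le hρ
      (fun k => mul_nonneg hB.le (Real.rpow_nonneg (hr k).le _)) hψ ha ?_
    filter_upwards [hr0.eventually (gt_mem_nhds hρ)] with k hrk hxk
    rw [dist_eq_norm] at hxk ⊢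
    have hstep := step_length_le_of_kl (hr k) (hr (k + 1)).le hθ₀.le hθ₁.le hκ.le (ht k) (hn k)
      hK.le (hdec k) (hkl k hxk hrk)
    rw [hx k, ← mul_sub, div_mul_eq_mul_div, le_div_iff₀ hκθ]
    linarith
  exact ⟨tendsto_iff_norm_sub_tendsto_zero.2
    (squeeze_zero' (.of_forall fun k => norm_nonneg _) hdist hψ), _, hB, hdist⟩

theorem norm_le_of_apply_add_smul_eq_neg {F : Type*} [NormedAddCommGroup F] [NormedSpace ℝ F]
    {A : F →L[ℝ] F} {d w : F} {ρ ρmax C : ℝ} (hA : ‖A‖ ≤ C) (hρ : ρ ∈ Set.Icc 0 ρmax)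
    (h : A d + ρ • d = -w) : ‖w‖ ≤ (C + ρmax) * ‖d‖ := by
  calc ‖w‖ = ‖A d + ρ • d‖ := by rw [h, norm_neg]
    _ ≤ ‖A‖ * ‖d‖ + ρ * ‖d‖ := by
      grw [norm_add_le, A.le_opNorm, norm_smul, Real.norm_of_nonneg hρ.1]
    _ ≤ (C + ρmax) * ‖d‖ := by
      rw [add_mul]; gcongr; exact hρ.2

theorem rpow_le_mul_norm_of_kl_of_regularized_newton {F : Type*} [NormedAddCommGroup F]
    [NormedSpace ℝ F] {H : F →L[ℝ] F} {d w : F} {r A θ ρ ρmax C : ℝ} (hr : 0 < r) (hA : 0 ≤ A)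
    (hkl : 1 ≤ A * r ^ (-θ) * ‖w‖) (hH : ‖H‖ ≤ C) (hρ : ρ ∈ Set.Icc 0 ρmax)
    (hdir : H d + ρ • d = -w) : r ^ θ ≤ A * (C + ρmax) * ‖d‖ := by
  rw [Real.rpow_neg hr.le, mul_right_comm, ← div_eq_mul_inv,
    le_div_iff₀ (Real.rpow_pos_of_pos hr θ), one_mul] at hkl
  calc r ^ θ ≤ A * ‖w‖ := hkl
    _ ≤ A * ((C + ρmax) * ‖d‖) :=
      mul_le_mul_of_nonneg_left (norm_le_of_apply_add_smul_eq_neg hH hρ hdir) hA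
    _ = A * (C + ρmax) * ‖d‖ := (mul_assoc _ _ _).symm

theorem mul_le_sub_of_armijo {E : Type*} [NormedAddCommGroup E] [InnerProductSpace ℝ E]
    {f : E → ℝ} {x d w : E} {t σ ζ : ℝ} (hσ : 0 ≤ σ) (ht : 0 ≤ t)
    (hdesc : ⟪w, d⟫ ≤ -ζ * ‖d‖ ^ 2) (hls : f (x + t • d) ≤ f x + σ * t * ⟪w, d⟫) :
    σ * ζ * (t * ‖d‖ ^ 2) ≤ f x - f (x + t • d) := by
  nlinarith [mul_le_mul_of_nonneg_left hdesc (mul_nonneg hσ ht)]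

theorem gradient_sub {𝕜 F : Type*} [RCLike 𝕜] [NormedAddCommGroup F] [InnerProductSpace 𝕜 F]
    [CompleteSpace F] {f g : F → 𝕜} {x : F} (hf : DifferentiableAt 𝕜 f x)
    (hg : DifferentiableAt 𝕜 g x) :
    gradient (fun y => f y - g y) x = gradient f x - gradient g x := by
  simp only [gradient, fderiv_fun_sub hf hg, map_sub]

section

variable {E : Type*} [NormedAddCommGroup E] [InnerProductSpace ℝ E] [CompleteSpace E]

theorem ContDiff.gradient {f : E → ℝ} {n : WithTop ℕ∞} (hf : ContDiff ℝ (n + 1) f) :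
    ContDiff ℝ n (gradient f) :=
  (InnerProductSpace.toDual ℝ E).symm.contDiff.comp (hf.fderiv_right le_rfl)

theorem exists_closedBall_lipschitzOnWith_gradient_sub_and_norm_fderiv_le {g h : E → ℝ}
    (hg : ContDiff ℝ 2 g) (hh : Differentiable ℝ h) (hhl : LocallyLipschitz (gradient h))
    (a : E) :
    ∃ R > 0, ∃ L : ℝ≥0, ∃ C > 0, LipschitzOnWith L (gradient fun y => g y - h y)
      (Metric.closedBall a R) ∧ ∀ z ∈ Metric.closedBall a R, ‖fderiv ℝ (gradient g) z‖ ≤ C := by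
  have hg1 : ContDiff ℝ 1 (gradient g) := hg.gradient
  have hgrad : gradient (fun y => g y - h y) = fun y => gradient g y - gradient h y :=
    funext fun y => gradient_sub (hg.differentiable two_ne_zero y) (hh y)
  obtain ⟨L, U, hU, hLU⟩ := (hgrad ▸ hg1.locallyLipschitz.sub hhl) a
  have hH : ∀ᶠ z in 𝓝 a, ‖fderiv ℝ (gradient g) z‖ < ‖fderiv ℝ (gradient g) a‖ + 1 :=
    (hg1.continuous_fderiv one_ne_zero).continuousAt.norm.eventually (gt_mem_nhds (lt_add_one _))
  obtain ⟨R, hR, hRsub⟩ := Metric.nhds_basis_closedBall.mem_iff.1 (inter_mem hU hH)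
  exact ⟨R, hR, L, _, by positivity, hLU.mono fun z hz => (hRsub hz).1,
    fun z hz => (hRsub hz).2.le⟩

theorem sub_sub_inner_gradient_le {f : E → ℝ} {L : ℝ≥0} {x y : E}
    (hf : ∀ z ∈ segment ℝ x y, DifferentiableAt ℝ f z)
    (hL : LipschitzOnWith L (gradient f) (segment ℝ x y)) :
    f y - f x - ⟪gradient f x, y - x⟫ ≤ L * ‖y - x‖ ^ 2 := by
  have hbound : ∀ z ∈ segment ℝ x y, ‖fderiv ℝ f z - fderiv ℝ f x‖ ≤ L * ‖y - x‖ := by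
    intro z hz
    rw [← toDual_gradient, ← toDual_gradient, ← map_sub, LinearIsometryEquiv.norm_map]
    calc ‖gradient f z - gradient f x‖ ≤ L * ‖z - x‖ :=
          hL.norm_sub_le hz (left_mem_segment ℝ x y)
      _ ≤ L * ‖y - x‖ := by
          have hsum := dist_add_dist_of_mem_segment hz
          simp only [dist_eq_norm] at hsum
          gcongr
          linarith [norm_nonneg (z - y), norm_sub_rev x z, norm_sub_rev x y]
  have hmvt := (convex_segment x y).norm_image_sub_le_of_norm_fderiv_le' hf hbound
    (left_mem_segment ℝ x y) (right_mem_segment ℝ x y)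
  rw [← inner_gradient_left, Real.norm_eq_abs] at hmvt
  linarith [le_abs_self (f y - f x - ⟪gradient f x, y - x⟫)]

theorem lt_mul_of_armijo_fails {f : E → ℝ} {S : Set E} {L : ℝ≥0} (hS : Convex ℝ S)
    (hf : ∀ z ∈ S, DifferentiableAt ℝ f z) (hL : LipschitzOnWith L (gradient f) S)
    {x d : E} {t σ ζ : ℝ} (hx : x ∈ S) (hxd : x + t • d ∈ S) (ht : 0 < t) (hd : d ≠ 0)
    (hσ : σ ≤ 1) (hdesc : ⟪gradient f x, d⟫ ≤ -ζ * ‖d‖ ^ 2)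
    (hfail : f x + σ * t * ⟪gradient f x, d⟫ < f (x + t • d)) :
    (1 - σ) * ζ < L * t := by
  have hseg := hS.segment_subset hx hxd
  have hquad := sub_sub_inner_gradient_le (fun z hz => hf z (hseg hz)) (hL.mono hseg)
  rw [add_sub_cancel_left, inner_smul_right, norm_smul, Real.norm_of_nonneg ht.le] at hquad
  have hpos : 0 < t * ‖d‖ ^ 2 := by positivity
  refine lt_of_mul_lt_mul_right ?_ hpos.le
  nlinarith [mul_le_mul_of_nonneg_left hdesc (by nlinarith : (0:ℝ) ≤ (1 - σ) * t)]

theorem exists_pos_eventually_le_of_armijo_backtracking {f : E → ℝ} {a : E} {U : Set E}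
    (hU : U ∈ 𝓝 a) (hUc : Convex ℝ U) (hf : ∀ z ∈ U, DifferentiableAt ℝ f z) {L : ℝ≥0}
    (hL : LipschitzOnWith L (gradient f) U) {x d : ℕ → E} {τ : ℕ → ℝ} {σ β ζ tmin : ℝ}
    (hσ : σ < 1) (hβ : 0 < β) (hζ : 0 < ζ) (htmin : 0 < tmin) (hx : Tendsto x atTop (𝓝 a))
    (hupd : ∀ k, x (k + 1) = x k + τ k • d k) (hτ : ∀ k, 0 < τ k) (hd : ∀ k, d k ≠ 0)
    (hdesc : ∀ k, ⟪gradient f (x k), d k⟫ ≤ -ζ * ‖d k‖ ^ 2)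
    (hbt : ∀ k, tmin ≤ τ k ∨
      f (x k) + σ * (τ k / β) * ⟪gradient f (x k), d k⟫ < f (x k + (τ k / β) • d k)) :
    ∃ t₀ > 0, ∀ᶠ k in atTop, t₀ ≤ τ k := by
  -- `L + 1` rather than `L`, so that `(1 - σ) * ζ / (L + 1)` is positive even when `L = 0`.
  have hL1 : LipschitzOnWith (L + 1) (gradient f) U := hL.weaken le_self_add
  have hL1pos : (0 : ℝ) < (L + 1 : ℝ≥0) := by positivity
  have htrial : Tendsto (fun k => x k + (τ k / β) • d k) atTop (𝓝 a) := by
    have hlim := hx.add (((hx.comp (tendsto_add_atTop_nat 1)).sub hx).const_smul β⁻¹)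
    rw [sub_self, smul_zero, add_zero] at hlim
    refine hlim.congr fun k => ?_
    simp only [Function.comp_apply, hupd k, add_sub_cancel_left, smul_smul, div_eq_inv_mul]
  refine ⟨min tmin (β * ((1 - σ) * ζ / (L + 1 : ℝ≥0))), lt_min htmin (by
    have : 0 < 1 - σ := by linarith
    positivity), ?_⟩
  filter_upwards [hx.eventually_mem hU, htrial.eventually_mem hU] with k hxk htk
  rcases hbt k with hlong | hfail
  · exact (min_le_left _ _).trans hlong
  · have hlt := lt_mul_of_armijo_fails hUc hf hL1 hxk htk (div_pos (hτ k) hβ) (hd k) hσ.le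
      (hdesc k) hfail
    refine (min_le_right _ _).trans ?_
    rw [← le_div_iff₀' hβ, div_le_iff₀ hL1pos]
    linarith

end

theorem rcsn_sublinear_rate_KL_exponent_gt_half_general
    {E : Type*} [NormedAddCommGroup E] [InnerProductSpace ℝ E] [FiniteDimensional ℝ E]
    (g h : E → ℝ) (hg : ContDiff ℝ 2 g) (hh : Differentiable ℝ h)
    (hhl : LocallyLipschitz (gradient h))
    (φ : E → ℝ) (hφ : ∀ y, φ y = g y - h y)
    (σ β ζ tmin ρmax : ℝ)
    (hσ : σ ∈ Set.Ioo (0 : ℝ) 1) (hβ : β ∈ Set.Ioo (0 : ℝ) 1)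
    (hζ : 0 < ζ) (htmin : 0 < tmin)
    (x d : ℕ → E) (τ ρ : ℕ → ℝ)
    (hρk : ∀ k, ρ k ∈ Set.Icc 0 ρmax)
    (hdne : ∀ k, d k ≠ 0)
    (hdir : ∀ k, fderiv ℝ (gradient g) (x k) (d k) + ρ k • d k = -(gradient φ (x k)))
    (hdesc : ∀ k, ⟪gradient φ (x k), d k⟫ ≤ -ζ * ‖d k‖ ^ 2)
    (hτpos : ∀ k, 0 < τ k)
    (hls : ∀ k, φ (x k + τ k • d k) ≤ φ (x k) + σ * τ k * ⟪gradient φ (x k), d k⟫)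
    (hbt : ∀ k, tmin ≤ τ k ∨
      φ (x k) + σ * (τ k / β) * ⟪gradient φ (x k), d k⟫ < φ (x k + (τ k / β) • d k))
    (hupd : ∀ k, x (k + 1) = x k + τ k • d k)
    (xb : E)
    (hacc : ∃ s : ℕ → ℕ, StrictMono s ∧ Tendsto (fun j => x (s j)) atTop (𝓝 xb))
    (M θ : ℝ) (hM : 0 < M) (hθ : θ ∈ Set.Ioo (1 / 2 : ℝ) 1)
    (η : ℝ) (hη : 0 < η)
    (hKL : ∀ y : E, ‖y - xb‖ ≤ η → φ xb < φ y → φ y < φ xb + η →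
      1 ≤ M * (1 - θ) * (φ y - φ xb) ^ (-θ) * ‖gradient φ y‖) :
    ∃ μ > (0 : ℝ), ∃ k₀ : ℕ, ∀ k ≥ k₀,
      ‖x k - xb‖ ≤ μ * (k : ℝ) ^ (-((1 - θ) / (2 * θ - 1))) := by
  obtain ⟨s, hs, hxs⟩ := hacc
  obtain ⟨hθ₀, hθ₁⟩ := hθ
  have hφd : Differentiable ℝ φ := funext hφ ▸ (hg.differentiable two_ne_zero).sub hh
  obtain ⟨R₀, hR₀, L, C, hC, hLip, hHess⟩ :=
    exists_closedBall_lipschitzOnWith_gradient_sub_and_norm_fderiv_le hg hh hhl xb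
  rw [← funext hφ] at hLip
  have hdec : ∀ k, σ * ζ * (τ k * ‖d k‖ ^ 2) ≤ φ (x k) - φ (x (k + 1)) := fun k =>
    hupd k ▸ mul_le_sub_of_armijo hσ.1.le (hτpos k).le (hdesc k) (hls k)
  have hanti : StrictAnti fun k => φ (x k) := strictAnti_nat_of_succ_lt fun k => by
    have := mul_pos (mul_pos hσ.1 hζ) (mul_pos (hτpos k) (pow_pos (norm_pos_iff.2 (hdne k)) 2))
    linarith [hdec k]
  obtain ⟨hlim, hgt⟩ :=
    hanti.tendsto_and_lt_of_tendsto_comp hs ((hφd.continuous.tendsto xb).comp hxs)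
  set r : ℕ → ℝ := fun k => φ (x k) - φ xb with hr
  have hr0 : Tendsto r atTop (𝓝 0) := by simpa using hlim.sub_const (φ xb)
  set K := M * (1 - θ) * (C + ρmax)
  have hK : 0 < K := mul_pos (mul_pos hM (by linarith)) (by linarith [(hρk 0).1.trans (hρk 0).2])
  have hkl : ∀ k, ‖x k - xb‖ ≤ min η R₀ → r k < min η R₀ → r k ^ θ ≤ K * ‖d k‖ :=
    fun k hxk hrk => rpow_le_mul_norm_of_kl_of_regularized_newton (sub_pos.2 (hgt k))
      (mul_nonneg hM.le (by linarith)) (hKL _ (hxk.trans (min_le_left _ _)) (hgt k)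
        (by linarith [min_le_left η R₀, hr ▸ hrk]))
      (hHess _ (mem_closedBall_iff_norm.2 (hxk.trans (min_le_right _ _)))) (hρk k) (hdir k)
  obtain ⟨hx, B, hB, hdist⟩ := tendsto_and_eventually_norm_sub_le_of_kl (t := τ)
    (lt_min hη hR₀) (mul_pos hσ.1 hζ) hK ⟨by linarith, hθ₁⟩ (fun k => sub_pos.2 (hgt k)) hr0
    (fun k => (hτpos k).le) (fun k => norm_nonneg (d k))
    (fun k => by rw [hupd k, add_sub_cancel_left, norm_smul, Real.norm_of_nonneg (hτpos k).le])
    (fun k => by linarith [hdec k]) hkl (hxs.mapClusterPt.of_comp hs.tendsto_atTop)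
  obtain ⟨t₀, ht₀, hτ⟩ := exists_pos_eventually_le_of_armijo_backtracking
    (Metric.closedBall_mem_nhds xb hR₀) (convex_closedBall xb R₀) (fun z _ => hφd z) hLip
    hσ.2 hβ.1 hζ htmin hx hupd hτpos hdne hdesc hbt
  obtain ⟨A, hA, hrate⟩ :=
    exists_rpow_le_mul_rpow_of_kl (t := τ) (n := fun k => ‖d k‖) (p := 1 - θ)
    (fun k => sub_pos.2 (hgt k)) (mul_pos hσ.1 hζ) hK ht₀ hθ₀ (by linarith)
    (fun k => by linarith [hdec k]) (by
      filter_upwards [hx.eventually (Metric.closedBall_mem_nhds xb (lt_min hη hR₀)),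
        hr0.eventually (gt_mem_nhds (lt_min hη hR₀))] with k hxk hrk
      exact hkl k (mem_closedBall_iff_norm.1 hxk) hrk) hτ
  obtain ⟨k₀, hk₀⟩ := eventually_atTop.1 (hdist.and hrate)
  refine ⟨B * A, by positivity, k₀, fun k hk => ?_⟩
  calc ‖x k - xb‖ ≤ B * r k ^ (1 - θ) := (hk₀ k hk).1
    _ ≤ B * (A * (k : ℝ) ^ (-((1 - θ) / (2 * θ - 1)))) := by gcongr; exact (hk₀ k hk).2
    _ = B * A * (k : ℝ) ^ (-((1 - θ) / (2 * θ - 1))) := (mul_assoc _ _ _).symm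

theorem rcsn_sublinear_rate_KL_exponent_gt_half
    {E : Type*} [NormedAddCommGroup E] [InnerProductSpace ℝ E] [FiniteDimensional ℝ E]
    (g h : E → ℝ) (hg : ContDiff ℝ 2 g) (hh : Differentiable ℝ h)
    (hhl : LocallyLipschitz (gradient h))
    (φ : E → ℝ) (hφ : ∀ y, φ y = g y - h y)
    (σ β ζ tmin ρmax : ℝ)
    (hσ : σ ∈ Set.Ioo (0 : ℝ) 1) (hβ : β ∈ Set.Ioo (0 : ℝ) 1)
    (hζ : 0 < ζ) (htmin : 0 < tmin) (hρmax : 0 ≤ ρmax)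
    (x d : ℕ → E) (τ ρ : ℕ → ℝ)
    (hwne : ∀ k, gradient φ (x k) ≠ 0)
    (hρk : ∀ k, ρ k ∈ Set.Icc 0 ρmax)
    (hdne : ∀ k, d k ≠ 0)
    (hdir : ∀ k, fderiv ℝ (gradient g) (x k) (d k) + ρ k • d k = -(gradient φ (x k)))
    (hdesc : ∀ k, ⟪gradient φ (x k), d k⟫ ≤ -ζ * ‖d k‖ ^ 2)
    (hτpos : ∀ k, 0 < τ k)
    (hls : ∀ k, φ (x k + τ k • d k) ≤ φ (x k) + σ * τ k * ⟪gradient φ (x k), d k⟫)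
    (hbt : ∀ k, tmin ≤ τ k ∨
      φ (x k) + σ * (τ k / β) * ⟪gradient φ (x k), d k⟫ < φ (x k + (τ k / β) • d k))
    (hupd : ∀ k, x (k + 1) = x k + τ k • d k)
    (hbdd : BddBelow (Set.range φ))
    (xb : E)
    (hacc : ∃ s : ℕ → ℕ, StrictMono s ∧ Tendsto (fun j => x (s j)) atTop (𝓝 xb))
    (M θ : ℝ) (hM : 0 < M) (hθ : θ ∈ Set.Ioo (1 / 2 : ℝ) 1)
    (η : ℝ) (hη : 0 < η)
    (hKL : ∀ y : E, ‖y - xb‖ ≤ η → φ xb < φ y → φ y < φ xb + η →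
      1 ≤ M * (1 - θ) * (φ y - φ xb) ^ (-θ) * ‖gradient φ y‖) :
    ∃ μ > (0 : ℝ), ∃ k₀ : ℕ, ∀ k ≥ k₀,
      ‖x k - xb‖ ≤ μ * (k : ℝ) ^ (-((1 - θ) / (2 * θ - 1))) :=
  rcsn_sublinear_rate_KL_exponent_gt_half_general g h hg hh hhl φ hφ σ β ζ tmin ρmax hσ hβ hζ htmin
    x d τ ρ hρk hdne hdir hdesc hτpos hls hbt hupd xb hacc M θ hM hθ η hη hKL
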